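/- arXiv:2403.17558 — 4 statements merged into one kernel-verified Lean document; each statement's English description precedes it below -/
import Mathlib

section
/- Let φ : R_D → R_C be a neural ring homomorphism with key vector V ∈ ({1,...,n} ∪ {0,u})^m. Then the corresponding code map q_φ : C → D sends c to the codeword d with d_j = c_i if V_j = i, d_j = 0 if V_j = 0, and d_j = 1 if V_j = u. -/
/-- The pullback of a code map `q : C → D`: the ring homomorphism
`q* : F_2^D → F_2^C`, `q*(f) = f ∘ q`. -/
def pullbackHom {n m : ℕ} {C : Set (Fin n → ZMod 2)} {D : Set (Fin m → ZMod 2)}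
    (q : ↥C → ↥D) : (↥D → ZMod 2) →+* (↥C → ZMod 2) :=
  Pi.ringHom fun c => Pi.evalRingHom (fun _ => ZMod 2) (q c)

/-- The `i`-th coordinate function of the neural ring `F_2^C`. -/
def coordFn {n : ℕ} (C : Set (Fin n → ZMod 2)) (i : Fin n) : ↥C → ZMod 2 :=
  fun c => (c : Fin n → ZMod 2) i

/-- A ring homomorphism `φ : R_D → R_C` between neural rings is *neural* if it sends each
coordinate function of `R_D` to a coordinate function of `R_C`, or to `0`, or to `1`. -/
def IsNeural {n m : ℕ} {C : Set (Fin n → ZMod 2)} {D : Set (Fin m → ZMod 2)}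
    (φ : (↥D → ZMod 2) →+* (↥C → ZMod 2)) : Prop :=
  ∀ j : Fin m,
    (∃ i : Fin n, φ (coordFn D j) = coordFn C i) ∨ φ (coordFn D j) = 0 ∨ φ (coordFn D j) = 1

/-- A key vector entry is either a coordinate index `i` (`Sum.inl i`) or a constant bit
(`Sum.inr 0` for `0`, `Sum.inr 1` for `u`, i.e. `1`). A code map `q : C → D` is
*described by* a key vector `V` if `q(c)_j = c_i` when `V_j = i`, and `q(c)_j = b` when
`V_j` is the constant `b`. -/
def DescribedBy {n m : ℕ} {C : Set (Fin n → ZMod 2)} {D : Set (Fin m → ZMod 2)}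
    (q : ↥C → ↥D) (V : Fin m → (Fin n ⊕ ZMod 2)) : Prop :=
  ∀ (c : ↥C) (j : Fin m),
    (q c : Fin m → ZMod 2) j = Sum.elim (fun i => (c : Fin n → ZMod 2) i) id (V j)

/-- A neural ring homomorphism `φ : R_D → R_C` has key vector `V` when `φ(x_j) = y_i` if
`V_j = i`, and `φ(x_j)` is the constant `b` if `V_j` is the constant `b`. -/
def HasKeyVector {n m : ℕ} {C : Set (Fin n → ZMod 2)} {D : Set (Fin m → ZMod 2)}
    (φ : (↥D → ZMod 2) →+* (↥C → ZMod 2)) (V : Fin m → (Fin n ⊕ ZMod 2)) : Prop :=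
  ∀ j : Fin m,
    φ (coordFn D j) = Sum.elim (fun i => coordFn C i) (fun b => Function.const ↥C b) (V j)

theorem codeMap_of_keyVector_general {n m : ℕ} {C : Set (Fin n → ZMod 2)} {D : Set (Fin m → ZMod 2)}
    (φ : (↥D → ZMod 2) →+* (↥C → ZMod 2)) (V : Fin m → (Fin n ⊕ ZMod 2))
    (hV : HasKeyVector φ V) (q : ↥C → ↥D) (hq : pullbackHom q = φ) :
    DescribedBy q V := by
  intro c j
  calc (q c : Fin m → ZMod 2) j = pullbackHom q (coordFn D j) c := rfl
    _ = Sum.elim (fun i => coordFn C i) (fun b => Function.const ↥C b) (V j) c := by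
      rw [hq, hV j]
    _ = Sum.elim (fun i => (c : Fin n → ZMod 2) i) id (V j) := by
      cases V j <;> rfl

/-- If `φ : R_D → R_C` is a neural ring homomorphism with key vector `V`, then the
corresponding code map `q_φ : C → D` (the one with `q_φ* = φ`) is described by `V`. -/
theorem codeMap_of_keyVector {n m : ℕ} {C : Set (Fin n → ZMod 2)} {D : Set (Fin m → ZMod 2)}
    (φ : (↥D → ZMod 2) →+* (↥C → ZMod 2)) (V : Fin m → (Fin n ⊕ ZMod 2))
    (hφ : IsNeural φ) (hV : HasKeyVector φ V) (q : ↥C → ↥D) (hq : pullbackHom q = φ) :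
    DescribedBy q V :=
  codeMap_of_keyVector_general φ V hV q hq
end

section
/- The neural ring R_{C_1 × C_2} of the concatenation product of codes C_1 and C_2 is a coproduct of R_{C_1} and R_{C_2} in the category of neural rings and neural ring homomorphisms: given any neural ring R_{C'} and neural ring homomorphisms φ_1 : R_{C_1} → R_{C'}, φ_2 : R_{C_2} → R_{C'}, there exists a unique neural ring homomorphism φ : R_{C_1 × C_2} → R_{C'} with φ ∘ φ_{π_1} = φ_1 and φ ∘ φ_{π_2} = φ_2, where φ_{π_i} = π_i* are the pullbacks of the projections. -/
/-- The concatenation product `C₁ × C₂ ⊆ {0,1}^{n+m}` of codes `C₁ ⊆ {0,1}^n` and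
`C₂ ⊆ {0,1}^m`. -/
def prodCode {n m : ℕ} (C1 : Set (Fin n → ZMod 2)) (C2 : Set (Fin m → ZMod 2)) :
    Set (Fin (n + m) → ZMod 2) :=
  {x | (fun i => x (Fin.castAdd m i)) ∈ C1 ∧ (fun j => x (Fin.natAdd n j)) ∈ C2}

/-- Projection of the concatenation product onto the first factor. -/
def proj1 {n m : ℕ} (C1 : Set (Fin n → ZMod 2)) (C2 : Set (Fin m → ZMod 2)) :
    ↥(prodCode C1 C2) → ↥C1 :=
  fun x => ⟨fun i => (x : Fin (n + m) → ZMod 2) (Fin.castAdd m i), x.2.1⟩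

/-- Projection of the concatenation product onto the second factor. -/
def proj2 {n m : ℕ} (C1 : Set (Fin n → ZMod 2)) (C2 : Set (Fin m → ZMod 2)) :
    ↥(prodCode C1 C2) → ↥C2 :=
  fun x => ⟨fun j => (x : Fin (n + m) → ZMod 2) (Fin.natAdd n j), x.2.2⟩

lemma ringHom_eval {X : Type*} [Fintype X] [DecidableEq X]
    (ψ : (X → ZMod 2) →+* ZMod 2) : ∃ x : X, ∀ f, ψ f = f x := by
  have htwo : ∀ c : ZMod 2, c = 0 ∨ c = 1 := by decide
  have hsum : (∑ x : X, fun y => if y = x then (1 : ZMod 2) else 0) = 1 := by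
    funext y
    simp [Finset.sum_apply, Finset.sum_ite_eq]
  have h1 : ∑ x : X, ψ (fun y => if y = x then (1 : ZMod 2) else 0) = 1 := by
    rw [← map_sum, hsum, map_one]
  obtain ⟨x, -, hx⟩ := Finset.exists_ne_zero_of_sum_ne_zero (h1 ▸ one_ne_zero)
  have hδ1 : ψ (fun y => if y = x then (1 : ZMod 2) else 0) = 1 := (htwo _).resolve_left hx
  refine ⟨x, fun f => ?_⟩
  have hmul : f * (fun y => if y = x then (1 : ZMod 2) else 0)
      = (fun y => if y = x then f x else 0) := by
    funext y
    by_cases h : y = x <;> simp [h]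
  rcases htwo (f x) with h0 | h01
  · have hz : (fun y => if y = x then f x else 0) = 0 := by
      funext y; simp [h0]
    calc ψ f = ψ f * ψ (fun y => if y = x then (1 : ZMod 2) else 0) := by rw [hδ1, mul_one]
      _ = ψ (f * fun y => if y = x then (1 : ZMod 2) else 0) := (map_mul ψ _ _).symm
      _ = 0 := by rw [hmul, hz, map_zero]
      _ = f x := h0.symm
  · have hz : (fun y => if y = x then f x else 0) = (fun y => if y = x then (1 : ZMod 2) else 0) := by
      funext y; simp [h01]
    calc ψ f = ψ f * ψ (fun y => if y = x then (1 : ZMod 2) else 0) := by rw [hδ1, mul_one]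
      _ = ψ (f * fun y => if y = x then (1 : ZMod 2) else 0) := (map_mul ψ _ _).symm
      _ = 1 := by rw [hmul, hz, hδ1]
      _ = f x := h01.symm


/-- The neural ring of the concatenation product `C₁ × C₂`, together with the pullbacks
of the projections, is a coproduct of `R_{C₁}` and `R_{C₂}` in the category of neural
rings and neural ring homomorphisms. -/
theorem prod_neuralRing_is_coproduct {n m k : ℕ} (C1 : Set (Fin n → ZMod 2))
    (C2 : Set (Fin m → ZMod 2)) (C' : Set (Fin k → ZMod 2))
    (φ1 : (↥C1 → ZMod 2) →+* (↥C' → ZMod 2)) (φ2 : (↥C2 → ZMod 2) →+* (↥C' → ZMod 2))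
    (h1 : IsNeural φ1) (h2 : IsNeural φ2) :
    ∃! φ : (↥(prodCode C1 C2) → ZMod 2) →+* (↥C' → ZMod 2),
      IsNeural φ ∧ φ.comp (pullbackHom (proj1 C1 C2)) = φ1 ∧
        φ.comp (pullbackHom (proj2 C1 C2)) = φ2 := by
  classical
  letI : Fintype ↥C1 := Fintype.ofFinite _
  letI : Fintype ↥C2 := Fintype.ofFinite _
  letI : Fintype ↥(prodCode C1 C2) := Fintype.ofFinite _
  have htwo : ∀ c : ZMod 2, c = 0 ∨ c = 1 := by decide
  -- pointwise evaluation structure of φ1, φ2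
  have e1 : ∀ c' : ↥C', ∃ x : ↥C1, ∀ f, φ1 f c' = f x := fun c' =>
    ringHom_eval ((Pi.evalRingHom (fun _ => ZMod 2) c').comp φ1)
  have e2 : ∀ c' : ↥C', ∃ x : ↥C2, ∀ f, φ2 f c' = f x := fun c' =>
    ringHom_eval ((Pi.evalRingHom (fun _ => ZMod 2) c').comp φ2)
  choose x1 hx1 using e1
  choose x2 hx2 using e2
  have qmem : ∀ c' : ↥C',
      (fun i => Fin.addCases (fun i => (x1 c').1 i) (fun j => (x2 c').1 j) i) ∈ prodCode C1 C2 := by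
    intro c'
    constructor
    · have : (fun i => Fin.addCases (motive := fun _ => ZMod 2)
          (fun i => (x1 c').1 i) (fun j => (x2 c').1 j) (Fin.castAdd m i)) = (x1 c').1 := by
        funext i; simp
      rw [this]; exact (x1 c').2
    · have : (fun j => Fin.addCases (motive := fun _ => ZMod 2)
          (fun i => (x1 c').1 i) (fun j => (x2 c').1 j) (Fin.natAdd n j)) = (x2 c').1 := by
        funext j; simp
      rw [this]; exact (x2 c').2
  set q : ↥C' → ↥(prodCode C1 C2) := fun c' => ⟨_, qmem c'⟩ with hqdef
  set Φ : (↥(prodCode C1 C2) → ZMod 2) →+* (↥C' → ZMod 2) := pullbackHom q with hΦdef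
  have hq1 : ∀ c', proj1 C1 C2 (q c') = x1 c' := by
    intro c'
    apply Subtype.ext
    funext i
    simp [q, proj1]
  have hq2 : ∀ c', proj2 C1 C2 (q c') = x2 c' := by
    intro c'
    apply Subtype.ext
    funext j
    simp [q, proj2]
  have comp1 : Φ.comp (pullbackHom (proj1 C1 C2)) = φ1 := by
    refine RingHom.ext fun f => funext fun c' => ?_
    show f (proj1 C1 C2 (q c')) = φ1 f c'
    rw [hq1, hx1]
  have comp2 : Φ.comp (pullbackHom (proj2 C1 C2)) = φ2 := by
    refine RingHom.ext fun f => funext fun c' => ?_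
    show f (proj2 C1 C2 (q c')) = φ2 f c'
    rw [hq2, hx2]
  have hneural : IsNeural Φ := by
    intro j
    induction j using Fin.addCases with
    | left i =>
        have : Φ (coordFn (prodCode C1 C2) (Fin.castAdd m i)) = φ1 (coordFn C1 i) := by
          funext c'
          show coordFn (prodCode C1 C2) (Fin.castAdd m i) (q c') = _
          rw [hx1 c' (coordFn C1 i)]
          simp [coordFn, q]
        rw [this]; exact h1 i
    | right j =>
        have : Φ (coordFn (prodCode C1 C2) (Fin.natAdd n j)) = φ2 (coordFn C2 j) := by
          funext c'
          show coordFn (prodCode C1 C2) (Fin.natAdd n j) (q c') = _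
          rw [hx2 c' (coordFn C2 j)]
          simp [coordFn, q]
        rw [this]; exact h2 j
  refine ⟨Φ, ⟨hneural, comp1, comp2⟩, ?_⟩
  rintro ψ ⟨-, hc1, hc2⟩
  have eψ1 : ∀ g, ψ (pullbackHom (proj1 C1 C2) g) = φ1 g := fun g => DFunLike.congr_fun hc1 g
  have eψ2 : ∀ g, ψ (pullbackHom (proj2 C1 C2) g) = φ2 g := fun g => DFunLike.congr_fun hc2 g
  have eΦ1 : ∀ g, Φ (pullbackHom (proj1 C1 C2) g) = φ1 g := fun g => DFunLike.congr_fun comp1 g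
  have eΦ2 : ∀ g, Φ (pullbackHom (proj2 C1 C2) g) = φ2 g := fun g => DFunLike.congr_fun comp2 g
  refine RingHom.ext fun f => ?_
  have hf : f = ∑ x : ↥(prodCode C1 C2), (fun y => if y = x then f x else 0) := by
    funext y
    simp [Finset.sum_apply, Finset.sum_ite_eq]
  rw [hf, map_sum, map_sum]
  refine Finset.sum_congr rfl fun x _ => ?_
  have hδ : (fun y => if y = x then (1 : ZMod 2) else 0) =
      (pullbackHom (proj1 C1 C2) (fun a => if a = proj1 C1 C2 x then 1 else 0)) *
      (pullbackHom (proj2 C1 C2) (fun b => if b = proj2 C1 C2 x then 1 else 0)) := by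
    funext y
    show (if y = x then (1 : ZMod 2) else 0) =
      (if proj1 C1 C2 y = proj1 C1 C2 x then (1 : ZMod 2) else 0) *
      (if proj2 C1 C2 y = proj2 C1 C2 x then (1 : ZMod 2) else 0)
    by_cases h : y = x
    · simp [h]
    · have hne : ¬(proj1 C1 C2 y = proj1 C1 C2 x ∧ proj2 C1 C2 y = proj2 C1 C2 x) := by
        rintro ⟨ha, hb⟩
        apply h
        apply Subtype.ext
        funext i
        induction i using Fin.addCases with
        | left i => exact congrFun (congrArg Subtype.val ha) i
        | right j => exact congrFun (congrArg Subtype.val hb) j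
      rcases not_and_or.mp hne with h' | h' <;> simp [h, h']
  have key : ψ (fun y => if y = x then (1 : ZMod 2) else 0)
      = Φ (fun y => if y = x then (1 : ZMod 2) else 0) := by
    rw [hδ, map_mul, map_mul, eψ1, eψ2, eΦ1, eΦ2]
  rcases htwo (f x) with h0 | h01
  · have hz : (fun y => if y = x then f x else 0) = 0 := by
      funext y; simp [h0]
    rw [hz, map_zero, map_zero]
  · have hz : (fun y => if y = x then f x else 0) = (fun y => if y = x then (1 : ZMod 2) else 0) := by
      funext y; simp [h01]
    rw [hz, key]
end

section
/- Let φ, ψ : R_D → R_C be neural ring homomorphisms with corresponding code maps q_φ, q_ψ : C → D. Let E = {c ∈ C : q_φ(c) = q_ψ(c)} with inclusion i : E → C. Then the pullback φ_i = i* : R_C → R_E is a coequalizer of φ and ψ in the category of neural rings and neural ring homomorphisms; in particular φ_i ∘ φ = φ_i ∘ ψ, and for any neural ring homomorphism χ : R_C → R_{C''} with χ ∘ φ = χ ∘ ψ there is a unique neural ring homomorphism θ : R_E → R_{C''} with θ ∘ φ_i = χ. -/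
/-- The equalizer code `E = {c ∈ C : q₁(c) = q₂(c)}` of two code maps `q₁, q₂ : C → D`,
as a neural code on `n` neurons. -/
def eqCode {n m : ℕ} {C : Set (Fin n → ZMod 2)} {D : Set (Fin m → ZMod 2)}
    (q1 q2 : ↥C → ↥D) : Set (Fin n → ZMod 2) :=
  {c | c ∈ C ∧ ∀ hc : c ∈ C, q1 ⟨c, hc⟩ = q2 ⟨c, hc⟩}

/-- The inclusion code map `i : E → C` of the equalizer code. -/
def eqIncl {n m : ℕ} {C : Set (Fin n → ZMod 2)} {D : Set (Fin m → ZMod 2)}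
    (q1 q2 : ↥C → ↥D) : ↥(eqCode q1 q2) → ↥C :=
  fun e => ⟨e.1, e.2.1⟩


lemma zmod2_cases (a : ZMod 2) : a = 0 ∨ a = 1 := by revert a; decide

lemma ringHom_to_zmod2_eval {α : Type*} [Finite α]
    (ev : (α → ZMod 2) →+* ZMod 2) : ∃ a : α, ∀ f, ev f = f a := by
  classical
  letI : Fintype α := Fintype.ofFinite α
  have h1 : ∑ c : α, (Pi.single c (1 : ZMod 2) : α → ZMod 2) = 1 :=
    Finset.univ_sum_single (1 : α → ZMod 2)
  have hsum : (∑ c : α, ev (Pi.single c (1 : ZMod 2))) = 1 := by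
    rw [← map_sum, h1, map_one]
  have hex : ∃ c : α, ev (Pi.single c (1 : ZMod 2)) = 1 := by
    by_contra h
    push_neg at h
    have h0 : ∀ c : α, ev (Pi.single c (1 : ZMod 2)) = 0 := fun c =>
      (zmod2_cases _).resolve_right (h c)
    rw [Finset.sum_congr rfl (fun c _ => h0 c), Finset.sum_const, smul_zero] at hsum
    exact one_ne_zero hsum.symm
  obtain ⟨a, ha⟩ := hex
  refine ⟨a, fun f => ?_⟩
  have hzero : ∀ c : α, c ≠ a → ev (Pi.single c (f c)) = 0 := by
    intro c hc
    have : (Pi.single c (f c) : α → ZMod 2) * (Pi.single a (1 : ZMod 2) : α → ZMod 2) = 0 := by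
      funext x
      simp only [Pi.mul_apply, Pi.zero_apply, Pi.single_apply]
      split_ifs <;> simp_all
    have := congrArg ev this
    rw [map_mul, ha, mul_one, map_zero] at this
    exact this
  calc ev f = ev (∑ c : α, Pi.single c (f c)) := by rw [Finset.univ_sum_single]
    _ = ∑ c : α, ev (Pi.single c (f c)) := map_sum ev _ _
    _ = ev (Pi.single a (f a)) := Finset.sum_eq_single a (fun c _ hc => hzero c hc)
        (fun h => absurd (Finset.mem_univ a) h)
    _ = f a := by
        rcases zmod2_cases (f a) with h | h
        · rw [h, Pi.single_zero, map_zero]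
        · rw [h, ha]

lemma exists_codeMap {α β : Type*} [Finite α]
    (χ : (α → ZMod 2) →+* (β → ZMod 2)) : ∃ q : β → α, ∀ f b, χ f b = f (q b) := by
  have h := fun b => ringHom_to_zmod2_eval ((Pi.evalRingHom (fun _ => ZMod 2) b).comp χ)
  choose q hq using h
  exact ⟨q, fun f b => hq b f⟩

/-- For neural ring homomorphisms `φ, ψ : R_D → R_C` with code maps `q_φ, q_ψ : C → D`,
the pullback `i*` of the inclusion of `E = {c ∈ C : q_φ(c) = q_ψ(c)}` is a coequalizer of
`φ` and `ψ` in the category of neural rings and neural ring homomorphisms. -/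
theorem eq_pullback_is_coequalizer {n m : ℕ} {C : Set (Fin n → ZMod 2)}
    {D : Set (Fin m → ZMod 2)} (φ ψ : (↥D → ZMod 2) →+* (↥C → ZMod 2))
    (hφ : IsNeural φ) (hψ : IsNeural ψ) (qφ qψ : ↥C → ↥D)
    (hqφ : pullbackHom qφ = φ) (hqψ : pullbackHom qψ = ψ) :
    IsNeural (pullbackHom (eqIncl qφ qψ)) ∧
    (pullbackHom (eqIncl qφ qψ)).comp φ = (pullbackHom (eqIncl qφ qψ)).comp ψ ∧
    ∀ (k : ℕ) (C'' : Set (Fin k → ZMod 2)) (χ : (↥C → ZMod 2) →+* (↥C'' → ZMod 2)),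
      IsNeural χ → χ.comp φ = χ.comp ψ →
      ∃! θ : (↥(eqCode qφ qψ) → ZMod 2) →+* (↥C'' → ZMod 2),
        IsNeural θ ∧ θ.comp (pullbackHom (eqIncl qφ qψ)) = χ := by
  classical
  subst hqφ hqψ
  set E := eqCode qφ qψ with hE
  -- the pullback of the inclusion restricts coordinate functions to coordinate functions
  have hcoord : ∀ j : Fin n,
      pullbackHom (eqIncl qφ qψ) (coordFn C j) = coordFn E j := fun j => rfl
  -- surjectivity of the restriction map i*
  have hsurj : Function.Surjective (pullbackHom (eqIncl qφ qψ)) := by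
    intro g
    refine ⟨fun c => if h : (c : Fin n → ZMod 2) ∈ E then g ⟨c, h⟩ else 0, ?_⟩
    funext e
    show (if h : (eqIncl qφ qψ e : Fin n → ZMod 2) ∈ E then g ⟨_, h⟩ else 0) = g e
    exact dif_pos e.2
  refine ⟨fun j => Or.inl ⟨j, hcoord j⟩, ?_, ?_⟩
  · -- i* ∘ φ = i* ∘ ψ
    refine RingHom.ext fun f => funext fun e => ?_
    show f (qφ (eqIncl qφ qψ e)) = f (qψ (eqIncl qφ qψ e))
    exact congrArg f (e.2.2 e.2.1)
  · intro k C'' χ hχ hcomm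
    obtain ⟨q, hq⟩ := exists_codeMap χ
    -- the code map q lands in E
    have hqE : ∀ c : ↥C'', (q c : Fin n → ZMod 2) ∈ E := by
      intro c
      refine ⟨(q c).2, fun hc => ?_⟩
      have hqc : (⟨(q c : Fin n → ZMod 2), hc⟩ : ↥C) = q c := Subtype.ext rfl
      rw [hqc]
      apply Subtype.ext
      funext j
      have h1 := congrFun (congrFun (congrArg DFunLike.coe hcomm) (coordFn D j)) c
      have h2 : χ (pullbackHom qφ (coordFn D j)) c = (qφ (q c) : Fin m → ZMod 2) j :=
        hq _ c
      have h3 : χ (pullbackHom qψ (coordFn D j)) c = (qψ (q c) : Fin m → ZMod 2) j :=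
        hq _ c
      have := h2.symm.trans (h1.trans h3)
      exact this
    -- define the factoring map
    set q' : ↥C'' → ↥E := fun c => ⟨(q c : Fin n → ZMod 2), hqE c⟩ with hq'
    have hfact : (pullbackHom q').comp (pullbackHom (eqIncl qφ qψ)) = χ := by
      refine RingHom.ext fun f => funext fun c => ?_
      show f (eqIncl qφ qψ (q' c)) = χ f c
      have : eqIncl qφ qψ (q' c) = q c := Subtype.ext rfl
      rw [this, hq]
    refine ⟨pullbackHom q', ⟨?_, hfact⟩, ?_⟩
    · -- pullbackHom q' is neural
      intro j
      have : pullbackHom q' (coordFn E j) = χ (coordFn C j) := by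
        funext c
        show (q c : Fin n → ZMod 2) j = χ (coordFn C j) c
        rw [hq]
        rfl
      rw [this]
      exact hχ j
    · -- uniqueness
      rintro θ ⟨-, hθ⟩
      refine RingHom.ext fun g => ?_
      obtain ⟨G, rfl⟩ := hsurj g
      have h1 := congrFun (congrArg DFunLike.coe hθ) G
      have h2 := congrFun (congrArg DFunLike.coe hfact) G
      exact h1.trans h2.symm
end

section
/- Every composition of elementary code maps is a trunk morphism: if q : C → D is a code map described by a key vector V (i.e., q(c)_j = c_i if V_j = i, q(c)_j = 0 if V_j = 0, q(c)_j = 1 if V_j = u), then for every trunk T ⊆ D the preimage q^{-1}(T) is a trunk in C. -/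
/-- A subset `T` of a code `C` is a *trunk* if it is empty or of the form
`Tk_C(σ) = {c ∈ C : σ ⊆ supp(c)}` for some `σ ⊆ [n]`. -/
def IsTrunk {n : ℕ} {C : Set (Fin n → ZMod 2)} (T : Set ↥C) : Prop :=
  T = ∅ ∨ ∃ σ : Set (Fin n), T = {c : ↥C | ∀ i ∈ σ, (c : Fin n → ZMod 2) i = 1}


def trunk {n : ℕ} {C : Set (Fin n → ZMod 2)} (σ : Set (Fin n)) : Set ↥C :=
  {c | ∀ i ∈ σ, (c : Fin n → ZMod 2) i = 1}

theorem isTrunk_iff {n : ℕ} {C : Set (Fin n → ZMod 2)} {T : Set ↥C} :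
    IsTrunk T ↔ T = ∅ ∨ ∃ σ, T = trunk σ :=
  Iff.rfl

namespace DescribedBy

variable {n m : ℕ} {C : Set (Fin n → ZMod 2)} {D : Set (Fin m → ZMod 2)}
  {q : ↥C → ↥D} {V : Fin m → (Fin n ⊕ ZMod 2)}

theorem preimage_trunk_of_inr_zero_mem (hq : DescribedBy q V) {σ : Set (Fin m)}
    (h : Sum.inr 0 ∈ V '' σ) : q ⁻¹' trunk σ = ∅ := by
  obtain ⟨j, hj, hVj⟩ := h
  refine Set.eq_empty_of_forall_notMem fun c hc => ?_
  have hqj : (q c : Fin m → ZMod 2) j = 1 := hc j hj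
  rw [hq c j, hVj] at hqj
  exact zero_ne_one hqj

theorem preimage_trunk_of_inr_zero_notMem (hq : DescribedBy q V) {σ : Set (Fin m)}
    (h : Sum.inr 0 ∉ V '' σ) : q ⁻¹' trunk σ = trunk (Sum.inl ⁻¹' (V '' σ)) := by
  ext c
  simp only [trunk, Set.mem_preimage, Set.mem_ofPred_eq, Set.mem_image]
  constructor
  · rintro hc i ⟨j, hj, hVj⟩
    simpa [hq c j, hVj] using hc j hj
  · intro hc j hj
    rw [hq c j]
    rcases hVj : V j with i | b
    · exact hc i ⟨j, hj, hVj⟩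
    · have hb : b ≠ 0 := by rintro rfl; exact h ⟨j, hj, hVj⟩
      exact (by decide : ∀ x : ZMod 2, x ≠ 0 → x = 1) b hb

end DescribedBy

/-- Every code map described by a key vector (i.e. every composition of elementary code
maps) is a trunk morphism: preimages of trunks are trunks. -/
theorem describedBy_is_trunk_morphism {n m : ℕ} {C : Set (Fin n → ZMod 2)}
    {D : Set (Fin m → ZMod 2)} (q : ↥C → ↥D) (V : Fin m → (Fin n ⊕ ZMod 2))
    (hq : DescribedBy q V) (T : Set ↥D) (hT : IsTrunk T) :
    IsTrunk (q ⁻¹' T) := by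
  rw [isTrunk_iff] at hT ⊢
  rcases hT with rfl | ⟨σ, rfl⟩
  · exact Or.inl Set.preimage_empty
  by_cases h : Sum.inr 0 ∈ V '' σ
  · exact Or.inl (hq.preimage_trunk_of_inr_zero_mem h)
  · exact Or.inr ⟨_, hq.preimage_trunk_of_inr_zero_notMem h⟩
end
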